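/- arXiv:2501.18888 — 2 statements merged into one kernel-verified Lean document; each statement's English description precedes it below -/
import Mathlib

section
/- Suppose X and Y satisfy the PHR model with constant γ > 0, and the density f is decreasing on [0,∞) with f(0) ≤ 1 (hence f(x) ≤ 1 for all x ≥ 0). Then for every t ≥ 0 with F̄(t) > 0, assuming ∫_t^∞ x F̄(x)^{γ−1} dx is finite, J^w(X,Y;t) ≥ c₂ ∫_t^∞ x F̄(x)^{γ−1} dx, where c₂ = −γ/(2 F̄(t)^{γ+1}). -/
/-!
Under the proportional hazard model the survival function of `Y` is `F̄ ^ γ`: away from the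
countably many jumps of the monotone density `f`, the function `x ↦ -F̄(x) ^ γ` has derivative
`γ f F̄ ^ (γ - 1) = g`, so the fundamental theorem of calculus with a countable exceptional set
gives `Ḡ(t) ≥ F̄(t) ^ γ`. Since `0 ≤ f ≤ 1`, the integrand `x f g` is at most `γ x F̄ ^ (γ - 1)`,
and dividing by `F̄(t) Ḡ(t) ≥ F̄(t) ^ (γ + 1)` gives the bound.
-/

open MeasureTheory Set Filter Topology

section TailIntegral

variable {f : ℝ → ℝ}

theorem integral_Ioi_eq_sub_primitive (hf : Integrable f) (a : ℝ) :
    (fun x => ∫ y in Ioi x, f y) = fun x => (∫ y in Ioi a, f y) - ∫ y in a..x, f y := by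
  ext x
  rw [← intervalIntegral.integral_Ioi_sub_Ioi' hf.integrableOn hf.integrableOn, sub_sub_cancel]

theorem continuous_integral_Ioi (hf : Integrable f) : Continuous fun x => ∫ y in Ioi x, f y := by
  rw [integral_Ioi_eq_sub_primitive hf 0]
  exact continuous_const.sub (hf.continuous_primitive 0)

theorem hasDerivAt_integral_Ioi (hf : Integrable f) {x : ℝ} (hx : ContinuousAt f x) :
    HasDerivAt (fun u => ∫ y in Ioi u, f y) (-f x) x := by
  rw [integral_Ioi_eq_sub_primitive hf 0]
  exact (intervalIntegral.integral_hasDerivAt_right hf.intervalIntegrable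
    hf.aestronglyMeasurable.stronglyMeasurableAtFilter hx).const_sub _

theorem tendsto_integral_Ioi_atTop (hf : Integrable f) :
    Tendsto (fun x => ∫ y in Ioi x, f y) atTop (𝓝 0) := by
  have h := (intervalIntegral_tendsto_integral_Ioi 0 hf.integrableOn tendsto_id).const_sub
    (∫ y in Ioi 0, f y)
  rw [sub_self] at h
  rwa [integral_Ioi_eq_sub_primitive hf 0]

theorem antitone_integral_Ioi (hf : Integrable f) (hf_nonneg : 0 ≤ f) :
    Antitone fun x => ∫ y in Ioi x, f y := fun _ _ hxy =>
  setIntegral_mono_set hf.integrableOn (ae_of_all _ hf_nonneg)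
    (Ioi_subset_Ioi hxy).eventuallyLE

theorem exists_integral_Ioi_eq (hf : Integrable f) {t v : ℝ} (hv : 0 < v)
    (hvt : v ≤ ∫ y in Ioi t, f y) : ∃ b, t ≤ b ∧ ∫ y in Ioi b, f y = v := by
  obtain ⟨c, hc, htc⟩ := (((tendsto_integral_Ioi_atTop hf).eventually (gt_mem_nhds hv)).and
    (eventually_ge_atTop t)).exists
  obtain ⟨b, hb, hbv⟩ := intermediate_value_Icc' htc (continuous_integral_Ioi hf).continuousOn
    (show v ∈ Icc _ _ from ⟨hc.le, hvt⟩)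
  exact ⟨b, hb.1, hbv⟩

end TailIntegral

theorem AntitoneOn.countable_not_continuousAt {f : ℝ → ℝ} {s : Set ℝ} (hf : AntitoneOn f s)
    (hs : IsOpen s) : {x ∈ s | ¬ContinuousAt f x}.Countable :=
  hf.countable_not_continuousWithinAt.mono fun x ⟨hx, hfx⟩ =>
    show x ∈ s ∧ ¬ContinuousWithinAt f s x from
      ⟨hx, by rwa [continuousWithinAt_iff_continuousAt (hs.mem_nhds hx)]⟩

theorem intervalIntegral_mul_rpow_integral_Ioi {f : ℝ → ℝ} (hf : Integrable f) (γ : ℝ) {t b : ℝ}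
    (htb : t ≤ b) (hpos : ∀ x ∈ Icc t b, 0 < ∫ y in Ioi x, f y)
    (hcont : {x ∈ Ioo t b | ¬ContinuousAt f x}.Countable) :
    ∫ x in t..b, γ * f x * (∫ y in Ioi x, f y) ^ (γ - 1)
      = (∫ y in Ioi t, f y) ^ γ - (∫ y in Ioi b, f y) ^ γ := by
  have hpow_cont : ContinuousOn (fun x => (∫ y in Ioi x, f y) ^ (γ - 1)) (Icc t b) :=
    (continuous_integral_Ioi hf).continuousOn.rpow_const fun x hx => Or.inl (hpos x hx).ne'
  have hint : IntervalIntegrable (fun x => γ * f x * (∫ y in Ioi x, f y) ^ (γ - 1)) volume t b :=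
    (intervalIntegrable_iff_integrableOn_Icc_of_le htb).2
      ((hf.const_mul γ).integrableOn.mul_continuousOn hpow_cont isCompact_Icc)
  have hderiv : ∀ x ∈ Ioo t b \ {x ∈ Ioo t b | ¬ContinuousAt f x},
      HasDerivAt (fun u => -(∫ y in Ioi u, f y) ^ γ)
        (γ * f x * (∫ y in Ioi x, f y) ^ (γ - 1)) x := by
    rintro x ⟨hx, hfx⟩
    have hfx : ContinuousAt f x := by_contra fun h => hfx ⟨hx, h⟩
    exact ((hasDerivAt_integral_Ioi hf hfx).rpow_const
      (Or.inl (hpos x (Ioo_subset_Icc_self hx)).ne')).fun_neg.congr_deriv (by ring)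
  rw [integral_eq_of_hasDerivAt_off_countable_of_le (fun u => -(∫ y in Ioi u, f y) ^ γ) _ htb hcont
    ((continuous_integral_Ioi hf).continuousOn.rpow_const
      fun x hx => Or.inl (hpos x hx).ne').neg hderiv hint]
  exact neg_sub_neg _ _

theorem rpow_integral_Ioi_le_integral_Ioi {f g : ℝ → ℝ} {γ t : ℝ} (hγ : 0 < γ)
    (hf : Integrable f) (hf_nonneg : 0 ≤ f) (hg : Integrable g) (hg_nonneg : 0 ≤ g)
    (hphr : ∀ x ∈ Ioi t, g x = γ * f x * (∫ y in Ioi x, f y) ^ (γ - 1))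
    (hcont : {x ∈ Ioi t | ¬ContinuousAt f x}.Countable) :
    (∫ y in Ioi t, f y) ^ γ ≤ ∫ y in Ioi t, g y := by
  have hG : 0 ≤ ∫ y in Ioi t, g y := setIntegral_nonneg measurableSet_Ioi fun y _ => hg_nonneg y
  rcases (setIntegral_nonneg measurableSet_Ioi fun y _ => hf_nonneg y :
    0 ≤ ∫ y in Ioi t, f y).eq_or_lt with hF | hF
  · rwa [← hF, Real.zero_rpow hγ.ne']
  -- `F̄` may vanish at a finite point, so instead of letting `b → ∞` we let the level
  -- `v = F̄(b)` decrease to `0`.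
  have htrunc : ∀ v ∈ Ioo 0 (∫ y in Ioi t, f y),
      (∫ y in Ioi t, f y) ^ γ - v ^ γ ≤ ∫ y in Ioi t, g y := by
    rintro v ⟨hv, hvt⟩
    obtain ⟨b, htb, hbv⟩ := exists_integral_Ioi_eq hf hv hvt.le
    have hpos : ∀ x ∈ Icc t b, 0 < ∫ y in Ioi x, f y := fun x hx =>
      hv.trans_le (hbv ▸ antitone_integral_Ioi hf hf_nonneg hx.2)
    rw [← hbv, ← intervalIntegral_mul_rpow_integral_Ioi hf γ htb hpos
      (hcont.mono fun _ hx => mem_sep (Ioo_subset_Ioi_self hx.1) hx.2),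
      intervalIntegral.integral_of_le htb]
    calc ∫ x in Ioc t b, γ * f x * (∫ y in Ioi x, f y) ^ (γ - 1)
        = ∫ x in Ioc t b, g x :=
          setIntegral_congr_fun measurableSet_Ioc fun x hx => (hphr x hx.1).symm
      _ ≤ ∫ x in Ioi t, g x := setIntegral_mono_set hg.integrableOn (ae_of_all _ hg_nonneg)
          Ioc_subset_Ioi_self.eventuallyLE
  have hlim : Tendsto (fun v => (∫ y in Ioi t, f y) ^ γ - v ^ γ) (𝓝[>] 0)
      (𝓝 ((∫ y in Ioi t, f y) ^ γ)) := by
    simpa [Real.zero_rpow hγ.ne'] using tendsto_const_nhds.sub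
      ((Real.continuousAt_rpow_const 0 γ (Or.inr hγ.le)).tendsto.mono_left nhdsWithin_le_nhds)
  exact le_of_tendsto hlim (eventually_of_mem (Ioo_mem_nhdsGT hF) htrunc)

theorem setIntegral_mul_mul_le_of_le_one {f g : ℝ → ℝ} {γ t : ℝ} (hγ : 0 ≤ γ) (ht : 0 ≤ t)
    (hf_nonneg : 0 ≤ f) (hf_le_one : ∀ x ∈ Ioi t, f x ≤ 1) (hg_nonneg : 0 ≤ g)
    (hphr : ∀ x ∈ Ioi t, g x = γ * f x * (∫ y in Ioi x, f y) ^ (γ - 1))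
    (hfin : IntegrableOn (fun x => x * (∫ y in Ioi x, f y) ^ (γ - 1)) (Ioi t)) :
    ∫ x in Ioi t, x * f x * g x ≤ γ * ∫ x in Ioi t, x * (∫ y in Ioi x, f y) ^ (γ - 1) := by
  rw [← integral_const_mul]
  refine integral_mono_of_nonneg (ae_restrict_of_forall_mem measurableSet_Ioi fun x hx => ?_)
    (hfin.const_mul γ) (ae_restrict_of_forall_mem measurableSet_Ioi fun x hx => ?_)
  · exact mul_nonneg (mul_nonneg (ht.trans hx.le) (hf_nonneg x)) (hg_nonneg x)
  · have hweight : 0 ≤ γ * (x * (∫ y in Ioi x, f y) ^ (γ - 1)) :=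
      mul_nonneg hγ (mul_nonneg (ht.trans hx.le) (Real.rpow_nonneg
        (setIntegral_nonneg measurableSet_Ioi fun y _ => hf_nonneg y) _))
    calc x * f x * g x = γ * (x * (∫ y in Ioi x, f y) ^ (γ - 1)) * (f x * f x) := by
          rw [hphr x hx]; ring
      _ ≤ γ * (x * (∫ y in Ioi x, f y) ^ (γ - 1)) :=
          mul_le_of_le_one_right hweight
            (mul_le_one₀ (hf_le_one x hx) (hf_nonneg x) (hf_le_one x hx))

theorem weighted_residual_inaccuracy_decreasing_density_bound_general
    (f g : ℝ → ℝ) (γ : ℝ) (hγ : 0 < γ)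
    (hf_nonneg : ∀ x, 0 ≤ f x) (hg_nonneg : ∀ x, 0 ≤ g x)
    (hf_one : ∫ x, f x = 1) (hg_one : ∫ x, g x = 1)
    (hphr : ∀ x ≥ (0 : ℝ), g x = γ * f x * (∫ y in Ioi x, f y) ^ (γ - 1))
    (hf_anti : AntitoneOn f (Ici 0)) (hf0 : f 0 ≤ 1)
    (t : ℝ) (ht : 0 ≤ t) (hF : 0 < ∫ x in Ioi t, f x)
    (hfin : IntegrableOn (fun x => x * (∫ y in Ioi x, f y) ^ (γ - 1)) (Ioi t)) :
    -(1 / 2) * ∫ x in Ioi t,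
        x * f x * g x / ((∫ y in Ioi t, f y) * (∫ y in Ioi t, g y))
      ≥ (-γ / (2 * (∫ y in Ioi t, f y) ^ (γ + 1))) *
          ∫ x in Ioi t, x * (∫ y in Ioi x, f y) ^ (γ - 1) := by
  have hf : Integrable f := .of_integral_ne_zero (by rw [hf_one]; exact one_ne_zero)
  have hg : Integrable g := .of_integral_ne_zero (by rw [hg_one]; exact one_ne_zero)
  have hphr_Ioi : ∀ x ∈ Ioi t, g x = γ * f x * (∫ y in Ioi x, f y) ^ (γ - 1) :=
    fun x hx => hphr x (ht.trans hx.le)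
  have hf_le_one : ∀ x ∈ Ioi t, f x ≤ 1 := fun x hx =>
    (hf_anti self_mem_Ici (ht.trans hx.le) (ht.trans hx.le)).trans hf0
  have hcont : {x ∈ Ioi t | ¬ContinuousAt f x}.Countable :=
    (hf_anti.mono fun _ hx => ht.trans hx.le).countable_not_continuousAt isOpen_Ioi
  have htail : (∫ y in Ioi t, f y) ^ γ ≤ ∫ y in Ioi t, g y :=
    rpow_integral_Ioi_le_integral_Ioi hγ hf hf_nonneg hg hg_nonneg hphr_Ioi hcont
  have hI := setIntegral_mul_mul_le_of_le_one hγ.le ht hf_nonneg hf_le_one hg_nonneg hphr_Ioi hfin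
  have hI0 : 0 ≤ ∫ x in Ioi t, x * f x * g x := setIntegral_nonneg measurableSet_Ioi fun x hx =>
    mul_nonneg (mul_nonneg (ht.trans hx.le) (hf_nonneg x)) (hg_nonneg x)
  have hdenom : (∫ y in Ioi t, f y) ^ (γ + 1) ≤ (∫ y in Ioi t, f y) * ∫ y in Ioi t, g y := by
    rw [Real.rpow_add_one hF.ne', mul_comm]
    exact mul_le_mul_of_nonneg_left htail hF.le
  rw [integral_div, ge_iff_le]
  calc (-γ / (2 * (∫ y in Ioi t, f y) ^ (γ + 1))) * ∫ x in Ioi t, x * (∫ y in Ioi x, f y) ^ (γ - 1)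
      = -(1 / 2) * (γ * (∫ x in Ioi t, x * (∫ y in Ioi x, f y) ^ (γ - 1))
          / (∫ y in Ioi t, f y) ^ (γ + 1)) := by ring
    _ ≤ _ := mul_le_mul_of_nonpos_left
      (div_le_div₀ (hI0.trans hI) hI (Real.rpow_pos_of_pos hF _) hdenom) (by norm_num)

/-- under the PHR model with `f` decreasing and `f(0) ≤ 1`,
`J^w(X,Y;t) ≥ c₂ ∫_t^∞ x F̄(x)^{γ−1} dx` with `c₂ = −γ/(2F̄(t)^{γ+1})`. -/
theorem weighted_residual_inaccuracy_decreasing_density_bound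
    (f g : ℝ → ℝ) (γ : ℝ) (hγ : 0 < γ)
    (hf_meas : Measurable f) (hg_meas : Measurable g)
    (hf_nonneg : ∀ x, 0 ≤ f x) (hg_nonneg : ∀ x, 0 ≤ g x)
    (hf_zero : ∀ x < 0, f x = 0) (hg_zero : ∀ x < 0, g x = 0)
    (hf_one : ∫ x, f x = 1) (hg_one : ∫ x, g x = 1)
    (hphr : ∀ x ≥ (0 : ℝ), g x = γ * f x * (∫ y in Ioi x, f y) ^ (γ - 1))
    (hf_anti : AntitoneOn f (Ici 0)) (hf0 : f 0 ≤ 1)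
    (t : ℝ) (ht : 0 ≤ t) (hF : 0 < ∫ x in Ioi t, f x)
    (hfin : IntegrableOn (fun x => x * (∫ y in Ioi x, f y) ^ (γ - 1)) (Ioi t)) :
    -(1 / 2) * ∫ x in Ioi t,
        x * f x * g x / ((∫ y in Ioi t, f y) * (∫ y in Ioi t, g y))
      ≥ (-γ / (2 * (∫ y in Ioi t, f y) ^ (γ + 1))) *
          ∫ x in Ioi t, x * (∫ y in Ioi x, f y) ^ (γ - 1) :=
  weighted_residual_inaccuracy_decreasing_density_bound_general f g γ hγ hf_nonneg hg_nonneg hf_one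
    hg_one hphr hf_anti hf0 t ht hF hfin
end

section
/- Suppose X and Y satisfy the PHR model with constant γ > 0 and F̄(x) > 0 for all x ≥ 0. Then for every t ≥ 0, assuming ∫_t^∞ x λ_F(x) f(x) dx is finite, the weighted residual inaccuracy satisfies J^w(X,Y;t) ≥ −(γ/(2 F̄(t)))∫_t^∞ x λ_F(x) f(x) dx, where λ_F(x) = f(x)/F̄(x) is the hazard rate of X. -/
open MeasureTheory Set Filter Topology

/-!
Under the PHR model `Ḡ(t) = F̄(t)^γ`, and `F̄(x) ≤ F̄(t)` for `x > t`, so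
`g(x) / Ḡ(t) = γ f(x) F̄(x)^(γ-1) / F̄(t)^γ ≤ γ f(x) / F̄(x) = γ λ_F(x)`;
integrating against `x f(x) / (2 F̄(t))` gives the bound.

The identity `∫_t^∞ γ f F̄^(γ-1) = F̄(t)^γ` is a change of variables: `F̄` pushes the measure
`f(x) dx` on `(t, ∞)` forward to Lebesgue measure on `(0, F̄(t)]` (the probability integral
transform). Indeed `F̄` is continuous, antitone and tends to `0`, so for `0 ≤ w ≤ F̄(t)` the set
`{x > t | F̄(x) ≤ w}` lies between `(a, ∞)` and `[a, ∞)`, where `a` is the first point with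
`F̄(a) = w`, and its `f`-mass is `F̄(a) = w`.
-/

noncomputable def survival (f : ℝ → ℝ) (x : ℝ) : ℝ := ∫ y in Ioi x, f y

section Survival

variable {f : ℝ → ℝ}

theorem survival_eq_integral_Ioc_add (hf : Integrable f) {a b : ℝ} (hab : a ≤ b) :
    survival f a = (∫ y in Ioc a b, f y) + survival f b := by
  rw [survival, survival, ← setIntegral_union (Ioc_disjoint_Ioi le_rfl) measurableSet_Ioi
    hf.integrableOn hf.integrableOn, Ioc_union_Ioi_eq_Ioi hab]

theorem survival_eq_sub_intervalIntegral (hf : Integrable f) (a x : ℝ) :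
    survival f x = survival f a - ∫ y in a..x, f y := by
  rcases le_total a x with h | h
  · rw [intervalIntegral.integral_of_le h, survival_eq_integral_Ioc_add hf h]
    ring
  · rw [intervalIntegral.integral_symm, intervalIntegral.integral_of_le h,
      survival_eq_integral_Ioc_add hf h]
    ring

theorem continuous_survival (hf : Integrable f) : Continuous (survival f) :=
  (continuous_const.sub (intervalIntegral.continuous_primitive
    (fun _ _ => hf.intervalIntegrable) 0)).congr
    fun x => (survival_eq_sub_intervalIntegral hf 0 x).symm

theorem tendsto_survival_atTop (hf : Integrable f) : Tendsto (survival f) atTop (𝓝 0) := by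
  have h := (intervalIntegral_tendsto_integral_Ioi 0 hf.integrableOn tendsto_id).const_sub
    (survival f 0)
  rw [survival, sub_self] at h
  exact h.congr fun x => (survival_eq_sub_intervalIntegral hf 0 x).symm

theorem survival_nonneg (hf0 : ∀ x, 0 ≤ f x) (x : ℝ) : 0 ≤ survival f x :=
  setIntegral_nonneg measurableSet_Ioi fun y _ => hf0 y

theorem antitone_survival (hf : Integrable f) (hf0 : ∀ x, 0 ≤ f x) : Antitone (survival f) :=
  fun a b hab => by
    rw [survival_eq_integral_Ioc_add hf hab]
    exact le_add_of_nonneg_left (setIntegral_nonneg measurableSet_Ioc fun x _ => hf0 x)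

theorem setIntegral_Ioi_inter_survival_preimage_Iic (hf : Integrable f) (hf0 : ∀ x, 0 ≤ f x)
    {t w : ℝ} (hw : 0 ≤ w) (hwt : w ≤ survival f t) :
    ∫ x in Ioi t ∩ survival f ⁻¹' Iic w, f x = w := by
  set U := Ici t ∩ survival f ⁻¹' Iic w
  rcases U.eq_empty_or_nonempty with hU | hU
  · have hw0 : w ≤ 0 := ge_of_tendsto (tendsto_survival_atTop hf) <|
      eventually_atTop.2 ⟨t, fun x hx => le_of_not_ge fun hxw =>
        hU.subset (show x ∈ U from ⟨hx, hxw⟩)⟩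
    rw [subset_eq_empty (inter_subset_inter_left _ Ioi_subset_Ici_self) hU, setIntegral_empty]
    linarith
  · have hbdd : BddBelow U := ⟨t, fun x hx => hx.1⟩
    set a := sInf U
    have haU : a ∈ U :=
      (isClosed_Ici.inter (isClosed_Iic.preimage (continuous_survival hf))).csInf_mem hU hbdd
    have hFa : survival f a = w := by
      obtain ⟨x, hx, hFx⟩ := intermediate_value_Icc' haU.1
        (continuous_survival hf).continuousOn ⟨haU.2, hwt⟩
      have hxa : x = a := le_antisymm hx.2 (csInf_le hbdd ⟨hx.1, hFx.le⟩)
      rwa [hxa] at hFx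
    apply le_antisymm
    · calc ∫ x in Ioi t ∩ survival f ⁻¹' Iic w, f x ≤ ∫ x in Ici a, f x :=
            setIntegral_mono_set hf.integrableOn (.of_forall hf0) <|
              LE.le.eventuallyLE (show Ioi t ∩ survival f ⁻¹' Iic w ≤ Ici a from
                fun x hx => csInf_le hbdd ⟨Ioi_subset_Ici_self hx.1, hx.2⟩)
        _ = w := integral_Ici_eq_integral_Ioi.trans hFa
    · calc w = ∫ x in Ioi a, f x := hFa.symm
        _ ≤ ∫ x in Ioi t ∩ survival f ⁻¹' Iic w, f x :=
            setIntegral_mono_set hf.integrableOn (.of_forall hf0) <|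
              LE.le.eventuallyLE (show Ioi a ≤ Ioi t ∩ survival f ⁻¹' Iic w from
                fun x (hx : a < x) =>
                  ⟨haU.1.trans_lt hx, (antitone_survival hf hf0 hx.le).trans hFa.le⟩)

theorem map_survival_withDensity_restrict_Ioi (hf : Integrable f) (hf0 : ∀ x, 0 ≤ f x)
    (t : ℝ) :
    ((volume.restrict (Ioi t)).withDensity fun x => ENNReal.ofReal (f x)).map (survival f)
      = volume.restrict (Ioc 0 (survival f t)) := by
  set ν := (volume.restrict (Ioi t)).withDensity fun x => ENNReal.ofReal (f x)
  have hν : ∀ s, MeasurableSet s → ν s = ENNReal.ofReal (∫ x in s ∩ Ioi t, f x) := by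
    intro s hs
    rw [withDensity_apply _ hs, Measure.restrict_restrict hs,
      ofReal_integral_eq_lintegral_ofReal hf.integrableOn (.of_forall hf0)]
  have : IsFiniteMeasure ν :=
    isFiniteMeasure_withDensity_ofReal hf.integrableOn.hasFiniteIntegral
  have hF := continuous_survival hf
  refine Measure.ext_of_Iic _ _ fun w => ?_
  rw [Measure.map_apply hF.measurable measurableSet_Iic,
    hν _ (hF.measurable measurableSet_Iic), Measure.restrict_apply measurableSet_Iic,
    inter_comm (Iic w), Ioc_inter_Iic, Real.volume_Ioc, sub_zero]
  rcases lt_or_ge w 0 with hw | hw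
  · have hempty : survival f ⁻¹' Iic w = ∅ :=
      eq_empty_of_forall_notMem fun x hx => (hw.trans_le (survival_nonneg hf0 x)).not_ge hx
    rw [hempty, empty_inter, setIntegral_empty, ENNReal.ofReal_zero,
      ENNReal.ofReal_eq_zero.2 ((min_le_right _ _).trans hw.le)]
  · have hpre : survival f ⁻¹' Iic w ∩ Ioi t
        = Ioi t ∩ survival f ⁻¹' Iic (min (survival f t) w) := by
      ext x
      simp only [mem_inter_iff, mem_preimage, mem_Iic, mem_Ioi, le_min_iff]
      exact ⟨fun h => ⟨h.2, antitone_survival hf hf0 h.2.le, h.1⟩, fun h => ⟨h.2.2, h.1⟩⟩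
    rw [hpre, setIntegral_Ioi_inter_survival_preimage_Iic hf hf0
      (le_min (survival_nonneg hf0 t) hw) (min_le_left _ _)]

theorem setIntegral_Ioi_mul_comp_survival (hf : Integrable f) (hf0 : ∀ x, 0 ≤ f x)
    {φ : ℝ → ℝ} (hφ : Measurable φ) (t : ℝ) :
    ∫ x in Ioi t, f x * φ (survival f x) = ∫ u in Ioc 0 (survival f t), φ u := by
  rw [← map_survival_withDensity_restrict_Ioi hf hf0 t,
    integral_map (continuous_survival hf).aemeasurable hφ.aestronglyMeasurable,
    integral_withDensity_eq_integral_toReal_smul₀ hf.aemeasurable.ennreal_ofReal.restrict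
      (.of_forall fun _ => ENNReal.ofReal_lt_top)]
  simp only [ENNReal.toReal_ofReal (hf0 _), smul_eq_mul]

theorem setIntegral_Ioi_mul_survival_rpow (hf : Integrable f) (hf0 : ∀ x, 0 ≤ f x)
    {γ : ℝ} (hγ : 0 < γ) (t : ℝ) :
    ∫ x in Ioi t, γ * f x * survival f x ^ (γ - 1) = survival f t ^ γ := by
  calc ∫ x in Ioi t, γ * f x * survival f x ^ (γ - 1)
      = ∫ x in Ioi t, f x * (γ * survival f x ^ (γ - 1)) := by
        congr 1 with x
        ring
    _ = ∫ u in Ioc 0 (survival f t), γ * u ^ (γ - 1) :=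
        setIntegral_Ioi_mul_comp_survival hf hf0 ((measurable_id.pow_const _).const_mul _) t
    _ = survival f t ^ γ := by
        rw [← intervalIntegral.integral_of_le (survival_nonneg hf0 t),
          intervalIntegral.integral_const_mul, integral_rpow (Or.inl (by linarith)),
          sub_add_cancel, Real.zero_rpow hγ.ne', sub_zero]
        field_simp

end Survival

theorem rpow_sub_one_div_rpow_le_inv {u c γ : ℝ} (hu : 0 < u) (huc : u ≤ c) (hγ : 0 ≤ γ) :
    u ^ (γ - 1) / c ^ γ ≤ u⁻¹ :=
  calc u ^ (γ - 1) / c ^ γ = u ^ γ / c ^ γ * u⁻¹ := by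
        rw [Real.rpow_sub_one hu.ne']
        ring
    _ ≤ 1 * u⁻¹ := by
        gcongr
        exact div_le_one_of_le₀ (Real.rpow_le_rpow hu.le huc hγ)
          (Real.rpow_pos_of_pos (hu.trans_le huc) γ).le
    _ = u⁻¹ := one_mul _

theorem mul_phr_density_div_le {x a u c γ : ℝ} (hx : 0 ≤ x) (ha : 0 ≤ a) (hu : 0 < u)
    (huc : u ≤ c) (hγ : 0 < γ) :
    x * a * (γ * a * u ^ (γ - 1)) / (c * c ^ γ) ≤ γ / c * (x * (a / u) * a) := by
  have hc : 0 < c := hu.trans_le huc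
  calc x * a * (γ * a * u ^ (γ - 1)) / (c * c ^ γ)
      = γ * x * a * a / c * (u ^ (γ - 1) / c ^ γ) := by ring
    _ ≤ γ * x * a * a / c * u⁻¹ := by
        gcongr
        exact rpow_sub_one_div_rpow_le_inv hu huc hγ.le
    _ = γ / c * (x * (a / u) * a) := by ring

theorem weighted_residual_inaccuracy_hazard_density_lower_bound_general
    (f g : ℝ → ℝ) (γ : ℝ) (hγ : 0 < γ)
    (hf_nonneg : ∀ x, 0 ≤ f x) (hg_nonneg : ∀ x, 0 ≤ g x)
    (hf_one : ∫ x, f x = 1)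
    (hFpos : ∀ x ≥ (0 : ℝ), 0 < ∫ y in Ioi x, f y)
    (hphr : ∀ x ≥ (0 : ℝ), g x = γ * f x * (∫ y in Ioi x, f y) ^ (γ - 1))
    (t : ℝ) (ht : 0 ≤ t)
    (hfin : IntegrableOn
      (fun x => x * (f x / (∫ y in Ioi x, f y)) * f x) (Ioi t)) :
    -(1 / 2) * ∫ x in Ioi t,
        x * f x * g x / ((∫ y in Ioi t, f y) * (∫ y in Ioi t, g y))
      ≥ -(γ / (2 * (∫ y in Ioi t, f y))) *
          ∫ x in Ioi t, x * (f x / (∫ y in Ioi x, f y)) * f x := by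
  have hf : Integrable f := .of_integral_ne_zero (by rw [hf_one]; exact one_ne_zero)
  have hc : 0 < survival f t := hFpos t ht
  have hG : ∫ y in Ioi t, g y = survival f t ^ γ :=
    (setIntegral_congr_fun measurableSet_Ioi fun x hx => hphr x (ht.trans hx.le)).trans
      (setIntegral_Ioi_mul_survival_rpow hf hf_nonneg hγ t)
  have hbound : ∫ x in Ioi t, x * f x * g x / (survival f t * survival f t ^ γ)
      ≤ γ / survival f t * ∫ x in Ioi t, x * (f x / survival f x) * f x := by
    rw [← integral_const_mul]
    refine integral_mono_of_nonneg ?_ (hfin.const_mul _) ?_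
    all_goals filter_upwards [ae_restrict_mem measurableSet_Ioi] with x (hx : t < x)
    · have hx0 : 0 ≤ x := ht.trans hx.le
      exact div_nonneg (mul_nonneg (mul_nonneg hx0 (hf_nonneg x)) (hg_nonneg x)) (by positivity)
    · have hx0 : 0 ≤ x := ht.trans hx.le
      rw [hphr x hx0]
      exact mul_phr_density_div_le hx0 (hf_nonneg x) (hFpos x hx0)
        (antitone_survival hf hf_nonneg hx.le) hγ
  show -(1 / 2) * ∫ x in Ioi t, x * f x * g x / (survival f t * ∫ y in Ioi t, g y)
    ≥ -(γ / (2 * survival f t)) * ∫ x in Ioi t, x * (f x / survival f x) * f x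
  rw [hG, ge_iff_le, show γ / (2 * survival f t) = 1 / 2 * (γ / survival f t) by ring]
  linarith

/-- under the PHR model,
`J^w(X,Y;t) ≥ −(γ/(2F̄(t)))∫_t^∞ x λ_F(x) f(x) dx`. -/
theorem weighted_residual_inaccuracy_hazard_density_lower_bound
    (f g : ℝ → ℝ) (γ : ℝ) (hγ : 0 < γ)
    (hf_meas : Measurable f) (hg_meas : Measurable g)
    (hf_nonneg : ∀ x, 0 ≤ f x) (hg_nonneg : ∀ x, 0 ≤ g x)
    (hf_zero : ∀ x < 0, f x = 0) (hg_zero : ∀ x < 0, g x = 0)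
    (hf_one : ∫ x, f x = 1) (hg_one : ∫ x, g x = 1)
    (hFpos : ∀ x ≥ (0 : ℝ), 0 < ∫ y in Ioi x, f y)
    (hphr : ∀ x ≥ (0 : ℝ), g x = γ * f x * (∫ y in Ioi x, f y) ^ (γ - 1))
    (t : ℝ) (ht : 0 ≤ t)
    (hfin : IntegrableOn
      (fun x => x * (f x / (∫ y in Ioi x, f y)) * f x) (Ioi t)) :
    -(1 / 2) * ∫ x in Ioi t,
        x * f x * g x / ((∫ y in Ioi t, f y) * (∫ y in Ioi t, g y))
      ≥ -(γ / (2 * (∫ y in Ioi t, f y))) *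
          ∫ x in Ioi t, x * (f x / (∫ y in Ioi x, f y)) * f x :=
  weighted_residual_inaccuracy_hazard_density_lower_bound_general f g γ hγ hf_nonneg hg_nonneg
    hf_one hFpos hphr t ht hfin
end
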